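/- arXiv:1405.5800 — 2 statements merged into one kernel-verified Lean document; each statement's English description precedes it below -/
import Mathlib

section
/- Let G be a finite abelian group, B ⊆ G nonempty, ε ∈ [0,1] and η ∈ [0,1]. Let f: G → ℂ be supported on B and not identically zero, and let ω: Ĝ → ℝ_{≥0} be supported on Δ_η(f). Then for every integer m ≥ 1, E_{2m}(ω, Δ_ε(B)) ≥ ‖ω‖₁^{2m} · ( (η · ‖f‖₁ / (‖f‖_{2m/(2m−1)} · |B|^{1/(2m)}))^{2m} − ε ). -/
open scoped BigOperators

/-- The Fourier transform `f̂(γ) = ∑_x f(x)γ(x)`. -/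
noncomputable def dft {G : Type*} [AddCommGroup G] [Fintype G]
    (f : G → ℂ) (γ : AddChar G ℂ) : ℂ := ∑ x, f x * γ x

/-- The `η`-large spectrum of `f`: characters `γ` with `|f̂(γ)| ≥ η‖f‖₁`. -/
noncomputable def spec {G : Type*} [AddCommGroup G] [Fintype G]
    (f : G → ℂ) (η : ℝ) : Set (AddChar G ℂ) :=
  {γ | η * ∑ x, ‖f x‖ ≤ ‖dft f γ‖}

/-- The `ε`-large spectrum of (the indicator of) a set `B`. -/
noncomputable def specSet {G : Type*} [AddCommGroup G] (B : Finset G) (ε : ℝ) :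
    Set (AddChar G ℂ) :=
  {γ | ε * B.card ≤ ‖∑ x ∈ B, γ x‖}

/-- The additive energy `E_{2m}(ω,Γ)` on the dual group (written multiplicatively):
`∑ ω(γ₁)⋯ω(γ_m')·1_Γ(γ₁ + ⋯ + γ_m − γ₁' − ⋯ − γ_m')`. -/
noncomputable def energy {G : Type*} [AddCommGroup G] [Fintype G]
    [Fintype (AddChar G ℂ)] (ω : AddChar G ℂ → ℝ) (Γ : Set (AddChar G ℂ)) (m : ℕ) : ℝ :=
  ∑ γ : Fin m → AddChar G ℂ, ∑ γ' : Fin m → AddChar G ℂ,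
    (∏ i, ω (γ i)) * (∏ i, ω (γ' i)) * Γ.indicator 1 ((∏ i, γ i) / ∏ i, γ' i)

/-!
Choose coefficients `a γ = ω(γ) c(γ)` with `|c(γ)| ≤ 1` and `c(γ) f̂(γ) = |f̂(γ)|`, and put
`g(x) = ∑_γ a(γ) γ(x)`. Then `η‖f‖₁‖ω‖₁ ≤ ∑_γ ω(γ)|f̂(γ)| = ∑_x f(x) g(x)`, and since `f` lives on `B`,
Hölder with exponents `(2m/(2m-1), 2m)` bounds this by `‖f‖_{2m/(2m-1)} (∑_{x∈B} |g(x)|^{2m})^{1/(2m)}`.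
Expanding `|g|^{2m} = g^m ḡ^m` turns `∑_{x∈B} |g(x)|^{2m}` into a sum over `2m`-tuples of characters
weighted by `∑_{x∈B} (γ₁⋯γ_m / γ₁'⋯γ_m')(x)`, which has modulus at most `|B|` when the quotient lies
in `Δ_ε(B)` and less than `ε|B|` otherwise. Hence `∑_{x∈B} |g|^{2m} ≤ |B| (E_{2m}(ω, Δ_ε(B)) + ε‖ω‖₁^{2m})`.
-/

open Finset

theorem sum_norm_mul_pow_le {ι : Type*} [Fintype ι] (B : Finset ι) {f g : ι → ℂ}
    (hfB : ∀ x, f x ≠ 0 → x ∈ B) {n : ℕ} (hn : 1 < n) :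
    (∑ x, ‖f x‖ * ‖g x‖) ^ n ≤
      ((∑ x, ‖f x‖ ^ ((n : ℝ) / (n - 1))) ^ (((n : ℝ) - 1) / n)) ^ n *
        ∑ x ∈ B, ‖g x‖ ^ n := by
  have hn' : (1 : ℝ) < n := by exact_mod_cast hn
  have hpq : ((n : ℝ) / (n - 1)).HolderConjugate n :=
    (Real.HolderConjugate.conjExponent hn').symm
  have hsupp : ∑ x, ‖f x‖ * ‖g x‖ = ∑ x ∈ B, ‖f x‖ * ‖g x‖ :=
    (sum_subset (subset_univ B) fun x _ hx => by
      simp [show f x = 0 by by_contra h; exact hx (hfB x h)]).symm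
  have holder := Real.inner_le_Lp_mul_Lq_of_nonneg B hpq (f := fun x => ‖f x‖)
    (g := fun x => ‖g x‖) (fun _ _ => norm_nonneg _) (fun _ _ => norm_nonneg _)
  have hf_mono : (∑ x ∈ B, ‖f x‖ ^ ((n : ℝ) / (n - 1))) ^ (1 / ((n : ℝ) / (n - 1))) ≤
      (∑ x, ‖f x‖ ^ ((n : ℝ) / (n - 1))) ^ (((n : ℝ) - 1) / n) := by
    rw [one_div_div]
    gcongr
    exact subset_univ B
  have hg_pow : ((∑ x ∈ B, ‖g x‖ ^ (n : ℝ)) ^ (1 / (n : ℝ))) ^ n = ∑ x ∈ B, ‖g x‖ ^ n := by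
    simp only [Real.rpow_natCast]
    rw [← Real.rpow_natCast, ← Real.rpow_mul (by positivity), one_div_mul_cancel (by positivity),
      Real.rpow_one]
  rw [hsupp, ← hg_pow, ← mul_pow]
  gcongr
  exact holder.trans (mul_le_mul_of_nonneg_right hf_mono (by positivity))

theorem sum_prod_mul_prod_eq_pow {ι R : Type*} [Fintype ι] [CommSemiring R] (ω : ι → R)
    (m : ℕ) :
    ∑ v : Fin m → ι, ∑ w : Fin m → ι, (∏ i, ω (v i)) * ∏ i, ω (w i) = (∑ γ, ω γ) ^ (2 * m) := by
  rw [← sum_mul_sum, ← Fintype.sum_pow, ← pow_add, two_mul]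

theorem mul_sub_le_of_pow_le {x D W E ε : ℝ} {n : ℕ} (hD : 0 ≤ D) (hW : 0 ≤ W) (hE : 0 ≤ E)
    (hε : 0 ≤ ε) (h : (x * W) ^ n ≤ D ^ n * (E + ε * W ^ n)) :
    W ^ n * ((x / D) ^ n - ε) ≤ E := by
  rcases hD.eq_or_lt with rfl | hD
  · rcases n with _ | n
    · simpa using h
    · have : 0 ≤ W ^ (n + 1) * ε := by positivity
      rw [div_zero, zero_pow n.succ_ne_zero, zero_sub, mul_neg]
      linarith
  · rw [div_pow, mul_sub, ← mul_div_assoc, sub_le_iff_le_add, div_le_iff₀ (by positivity)]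
    linarith [mul_pow x W n]

section Characters

variable {G : Type*} [AddCommGroup G] [Fintype G]

theorem norm_sum_le_card_mul_indicator_add (B : Finset G) {ε : ℝ} (hε : 0 ≤ ε)
    (ψ : AddChar G ℂ) :
    ‖∑ x ∈ B, ψ x‖ ≤ B.card * ((specSet B ε).indicator 1 ψ + ε) := by
  by_cases hψ : ψ ∈ specSet B ε
  · rw [Set.indicator_of_mem hψ, Pi.one_apply]
    calc ‖∑ x ∈ B, ψ x‖ ≤ ∑ x ∈ B, ‖ψ x‖ := norm_sum_le _ _
      _ = B.card := by simp [AddChar.norm_apply]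
      _ ≤ B.card * (1 + ε) := by nlinarith
  · rw [Set.indicator_of_notMem hψ, zero_add, mul_comm]
    exact (not_le.mp hψ).le

variable [Fintype (AddChar G ℂ)]

theorem mul_sum_le_sum_mul_norm_dft {f : G → ℂ} {η : ℝ} {ω : AddChar G ℂ → ℝ}
    (hω0 : ∀ γ, 0 ≤ ω γ) (hωsupp : ∀ γ, ω γ ≠ 0 → γ ∈ spec f η) :
    η * (∑ x, ‖f x‖) * ∑ γ, ω γ ≤ ∑ γ, ω γ * ‖dft f γ‖ := by
  rw [mul_sum]
  refine sum_le_sum fun γ _ => ?_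
  by_cases hγ : ω γ = 0
  · simp [hγ]
  · rw [mul_comm]
    exact mul_le_mul_of_nonneg_left (hωsupp γ hγ) (hω0 γ)

theorem energy_nonneg {ω : AddChar G ℂ → ℝ} (hω0 : ∀ γ, 0 ≤ ω γ) (Γ : Set (AddChar G ℂ))
    (m : ℕ) :
    0 ≤ energy ω Γ m :=
  sum_nonneg fun _ _ => sum_nonneg fun _ _ => mul_nonneg
    (mul_nonneg (prod_nonneg fun _ _ => hω0 _) (prod_nonneg fun _ _ => hω0 _))
    (Set.indicator_nonneg (fun _ _ => zero_le_one) _)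

theorem energy_add_mul_sum_pow (ω : AddChar G ℂ → ℝ) (Γ : Set (AddChar G ℂ)) (m : ℕ) (ε : ℝ) :
    energy ω Γ m + ε * (∑ γ, ω γ) ^ (2 * m) =
      ∑ v : Fin m → AddChar G ℂ, ∑ w : Fin m → AddChar G ℂ,
        (∏ i, ω (v i)) * (∏ i, ω (w i)) * (Γ.indicator 1 ((∏ i, v i) / ∏ i, w i) + ε) := by
  simp only [energy, ← sum_prod_mul_prod_eq_pow, mul_sum, ← sum_add_distrib]
  exact sum_congr rfl fun _ _ => sum_congr rfl fun _ _ => by ring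

noncomputable def trigPoly (a : AddChar G ℂ → ℂ) (x : G) : ℂ := ∑ γ, a γ * γ x

theorem sum_mul_trigPoly (f : G → ℂ) (a : AddChar G ℂ → ℂ) :
    ∑ x, f x * trigPoly a x = ∑ γ, a γ * dft f γ := by
  simp only [trigPoly, dft, mul_sum]
  rw [sum_comm]
  exact sum_congr rfl fun _ _ => sum_congr rfl fun _ _ => by ring

theorem exists_norm_le_sum_mul_trigPoly_eq (f : G → ℂ) {ω : AddChar G ℂ → ℝ}
    (hω0 : ∀ γ, 0 ≤ ω γ) :
    ∃ a : AddChar G ℂ → ℂ, (∀ γ, ‖a γ‖ ≤ ω γ) ∧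
      ∑ x, f x * trigPoly a x = ((∑ γ, ω γ * ‖dft f γ‖ : ℝ) : ℂ) := by
  refine ⟨fun γ => ω γ * (starRingEnd ℂ (dft f γ) / ‖dft f γ‖), fun γ => ?_, ?_⟩
  · rw [norm_mul, norm_div, Complex.norm_conj, Complex.norm_real, Complex.norm_real, norm_norm,
      Real.norm_of_nonneg (hω0 γ)]
    exact mul_le_of_le_one_right (hω0 γ) (div_self_le_one _)
  · rw [sum_mul_trigPoly]
    push_cast
    refine sum_congr rfl fun γ _ => ?_
    rcases eq_or_ne (dft f γ) 0 with h | h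
    · simp [h]
    · rw [mul_assoc, div_mul_eq_mul_div, Complex.conj_mul', sq, mul_div_assoc,
        div_self (by exact_mod_cast norm_ne_zero_iff.mpr h), mul_one]

theorem norm_trigPoly_pow_eq (a : AddChar G ℂ → ℂ) (m : ℕ) (x : G) :
    ((‖trigPoly a x‖ ^ (2 * m) : ℝ) : ℂ) =
      ∑ v : Fin m → AddChar G ℂ, ∑ w : Fin m → AddChar G ℂ,
        (∏ i, a (v i)) * (∏ i, starRingEnd ℂ (a (w i))) * ((∏ i, v i) / ∏ i, w i) x := by
  rw [pow_mul, Complex.ofReal_pow, Complex.ofReal_pow, ← Complex.mul_conj', mul_pow,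
    trigPoly, map_sum, Fintype.sum_pow, Fintype.sum_pow, sum_mul_sum]
  refine sum_congr rfl fun v _ => sum_congr rfl fun w _ => ?_
  simp only [map_mul, ← AddChar.inv_apply_eq_conj, prod_mul_distrib, AddChar.div_apply',
    AddChar.prod_apply, prod_inv_distrib]
  ring

theorem sum_norm_trigPoly_pow_le (B : Finset G) {ε : ℝ} (hε : 0 ≤ ε) {ω : AddChar G ℂ → ℝ}
    {a : AddChar G ℂ → ℂ} (ha : ∀ γ, ‖a γ‖ ≤ ω γ) (m : ℕ) :
    ∑ x ∈ B, ‖trigPoly a x‖ ^ (2 * m) ≤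
      B.card * (energy ω (specSet B ε) m + ε * (∑ γ, ω γ) ^ (2 * m)) := by
  have hω0 : ∀ γ, 0 ≤ ω γ := fun γ => (norm_nonneg _).trans (ha γ)
  have hexpand : ((∑ x ∈ B, ‖trigPoly a x‖ ^ (2 * m) : ℝ) : ℂ) =
      ∑ v : Fin m → AddChar G ℂ, ∑ w : Fin m → AddChar G ℂ,
        (∏ i, a (v i)) * (∏ i, starRingEnd ℂ (a (w i))) * ∑ x ∈ B, ((∏ i, v i) / ∏ i, w i) x := by
    simp only [Complex.ofReal_sum, norm_trigPoly_pow_eq, mul_sum]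
    rw [sum_comm]
    exact sum_congr rfl fun _ _ => sum_comm
  rw [energy_add_mul_sum_pow, mul_sum]
  calc ∑ x ∈ B, ‖trigPoly a x‖ ^ (2 * m)
      = ‖((∑ x ∈ B, ‖trigPoly a x‖ ^ (2 * m) : ℝ) : ℂ)‖ := by
        rw [Complex.norm_real, Real.norm_of_nonneg (by positivity)]
    _ ≤ ∑ v : Fin m → AddChar G ℂ, ∑ w : Fin m → AddChar G ℂ,
          ‖(∏ i, a (v i)) * (∏ i, starRingEnd ℂ (a (w i)))‖ *
            ‖∑ x ∈ B, ((∏ i, v i) / ∏ i, w i) x‖ := by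
        rw [hexpand]
        refine (norm_sum_le _ _).trans (sum_le_sum fun v _ => (norm_sum_le _ _).trans ?_)
        simp only [norm_mul, le_refl]
    _ ≤ ∑ v : Fin m → AddChar G ℂ, ∑ w : Fin m → AddChar G ℂ,
          (∏ i, ω (v i)) * (∏ i, ω (w i)) *
            (B.card * ((specSet B ε).indicator 1 ((∏ i, v i) / ∏ i, w i) + ε)) := by
        refine sum_le_sum fun v _ => sum_le_sum fun w _ =>
          mul_le_mul ?_ (norm_sum_le_card_mul_indicator_add B hε _) (norm_nonneg _)
            (mul_nonneg (prod_nonneg fun _ _ => hω0 _) (prod_nonneg fun _ _ => hω0 _))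
        simp only [norm_mul, norm_prod, Complex.norm_conj]
        exact mul_le_mul (prod_le_prod (fun _ _ => norm_nonneg _) fun _ _ => ha _)
          (prod_le_prod (fun _ _ => norm_nonneg _) fun _ _ => ha _) (by positivity)
          (prod_nonneg fun _ _ => hω0 _)
    _ = _ := by
        simp only [mul_sum]
        exact sum_congr rfl fun _ _ => sum_congr rfl fun _ _ => by ring

end Characters

theorem energy_spectrum_lower_general {G : Type*} [AddCommGroup G] [Fintype G]
    [Fintype (AddChar G ℂ)] (B : Finset G) (ε η : ℝ)
    (hε0 : 0 ≤ ε) (hη0 : 0 ≤ η)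
    (f : G → ℂ) (hfB : ∀ x, f x ≠ 0 → x ∈ B)
    (ω : AddChar G ℂ → ℝ) (hω0 : ∀ γ, 0 ≤ ω γ) (hωsupp : ∀ γ, ω γ ≠ 0 → γ ∈ spec f η)
    (m : ℕ) (hm : 1 ≤ m) :
    (∑ γ, ω γ) ^ (2 * m) *
        ((η * (∑ x, ‖f x‖) /
            ((∑ x, ‖f x‖ ^ ((2 * m : ℝ) / (2 * m - 1))) ^
                ((2 * m - 1 : ℝ) / (2 * m)) *
              (B.card : ℝ) ^ ((1 : ℝ) / (2 * m)))) ^ (2 * m) - ε) ≤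
      energy ω (specSet B ε) m := by
  have hW : 0 ≤ ∑ γ, ω γ := sum_nonneg fun γ _ => hω0 γ
  obtain ⟨a, ha, hsum⟩ := exists_norm_le_sum_mul_trigPoly_eq f hω0
  have hcorr : η * (∑ x, ‖f x‖) * ∑ γ, ω γ ≤ ∑ x, ‖f x‖ * ‖trigPoly a x‖ :=
    calc _ ≤ ∑ γ, ω γ * ‖dft f γ‖ := mul_sum_le_sum_mul_norm_dft hω0 hωsupp
      _ = ‖∑ x, f x * trigPoly a x‖ := by
        rw [hsum, Complex.norm_real, Real.norm_of_nonneg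
          (sum_nonneg fun γ _ => mul_nonneg (hω0 γ) (norm_nonneg _))]
      _ ≤ _ := by simpa only [norm_mul] using norm_sum_le univ fun x => f x * trigPoly a x
  set Lp := (∑ x, ‖f x‖ ^ ((2 * m : ℝ) / (2 * m - 1))) ^ ((2 * m - 1 : ℝ) / (2 * m))
  have hholder := sum_norm_mul_pow_le B hfB (g := trigPoly a) (n := 2 * m) (by omega)
  push_cast at hholder
  have hcard : ((B.card : ℝ) ^ ((1 : ℝ) / (2 * m))) ^ (2 * m) = B.card := by
    rw [← Real.rpow_natCast, ← Real.rpow_mul (by positivity)]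
    push_cast
    rw [one_div_mul_cancel (by positivity), Real.rpow_one]
  refine mul_sub_le_of_pow_le (by positivity) hW (energy_nonneg hω0 _ _) hε0 ?_
  calc (η * (∑ x, ‖f x‖) * ∑ γ, ω γ) ^ (2 * m)
      ≤ (∑ x, ‖f x‖ * ‖trigPoly a x‖) ^ (2 * m) := pow_le_pow_left₀ (by positivity) hcorr _
    _ ≤ Lp ^ (2 * m) * ∑ x ∈ B, ‖trigPoly a x‖ ^ (2 * m) := hholder
    _ ≤ Lp ^ (2 * m) * (B.card * (energy ω (specSet B ε) m + ε * (∑ γ, ω γ) ^ (2 * m))) := by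
        gcongr
        exact sum_norm_trigPoly_pow_le B hε0 ha m
    _ = _ := by rw [mul_pow, hcard, mul_assoc]

/-- **Lower bound for the additive energy of a large spectrum** (relative version of
Shkredov's bound). -/
theorem energy_spectrum_lower {G : Type*} [AddCommGroup G] [Fintype G]
    [Fintype (AddChar G ℂ)] (B : Finset G) (hB : B.Nonempty) (ε η : ℝ)
    (hε0 : 0 ≤ ε) (hε1 : ε ≤ 1) (hη0 : 0 ≤ η) (hη1 : η ≤ 1)
    (f : G → ℂ) (hfB : ∀ x, f x ≠ 0 → x ∈ B) (hfne : f ≠ 0)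
    (ω : AddChar G ℂ → ℝ) (hω0 : ∀ γ, 0 ≤ ω γ) (hωsupp : ∀ γ, ω γ ≠ 0 → γ ∈ spec f η)
    (m : ℕ) (hm : 1 ≤ m) :
    (∑ γ, ω γ) ^ (2 * m) *
        ((η * (∑ x, ‖f x‖) /
            ((∑ x, ‖f x‖ ^ ((2 * m : ℝ) / (2 * m - 1))) ^
                ((2 * m - 1 : ℝ) / (2 * m)) *
              (B.card : ℝ) ^ ((1 : ℝ) / (2 * m)))) ^ (2 * m) - ε) ≤
      energy ω (specSet B ε) m :=
  energy_spectrum_lower_general B ε η hε0 hη0 f hfB ω hω0 hωsupp m hm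
end

section
/- Let G be a finite abelian group with dual Ĝ, let Γ ⊆ Ĝ, let d ≥ 1 be an integer, and suppose Δ ⊆ Ĝ is d-covered by Γ. Then there is Λ ⊆ Ĝ of size at most d such that: for every B ⊆ G which has (4d)^{−1}-control of Λ and (1/8)-control of Γ, one has |B̂(γ)| ≥ |B|/2 for every γ ∈ Δ. -/
/-!
Write `γ ∈ Δ` as `γ₁ γ₂⁻¹ ∏ λ ^ ε_λ` with `γ₁, γ₂ ∈ Γ`. At `x ∈ B` each factor lies within `δ`
of `1` (`δ = 1/8` or `(4d)⁻¹`), so it is `exp w` with `|Re w| ≤ -log (1 - δ)` and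
`|Im w| ≤ arcsin δ`; these bounds add up under multiplication. Hence `γ x = exp W` with
`exp (Re W) ≥ (7/8)² (1 - (4d)⁻¹)^d ≥ 147/256` and
`|Im W| ≤ 2 arcsin (1/8) + d arcsin (4d)⁻¹ ≤ 0.512`, so `Re (γ x) = exp (Re W) cos (Im W) ≥ 1/2`,
and summing over `B` gives `|B̂(γ)| ≥ |B|/2`.
Characters of an infinite group need not be unitary, which is why modulus and argument are
tracked separately rather than through `|1 - ab| ≤ |1 - a| + |1 - b|`.
-/

open scoped BigOperators Pointwise

/-- `⟨Λ⟩ = {∑_{λ∈Λ} ε_λ λ : ε_λ ∈ {−1,0,1}}` in the dual group, written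
multiplicatively. -/
def spanPM {G : Type*} [AddCommGroup G] (Λ : Finset (AddChar G ℂ)) :
    Set (AddChar G ℂ) :=
  {γ | ∃ ε : AddChar G ℂ → ℤ, (∀ lam, ε lam = -1 ∨ ε lam = 0 ∨ ε lam = 1) ∧
    γ = ∏ lam ∈ Λ, lam ^ ε lam}

open Complex ComplexConjugate

def expRect (R θ : ℝ) : Set ℂ := {z | ∃ w : ℂ, |w.re| ≤ R ∧ |w.im| ≤ θ ∧ exp w = z}

lemma expRect_mono {R R' θ θ' : ℝ} (hR : R ≤ R') (hθ : θ ≤ θ') : expRect R θ ⊆ expRect R' θ' :=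
  fun _ ⟨w, hre, him, hw⟩ => ⟨w, hre.trans hR, him.trans hθ, hw⟩

lemma mul_mem_expRect {z z' : ℂ} {R R' θ θ' : ℝ} (hz : z ∈ expRect R θ)
    (hz' : z' ∈ expRect R' θ') : z * z' ∈ expRect (R + R') (θ + θ') := by
  obtain ⟨w, hre, him, rfl⟩ := hz
  obtain ⟨w', hre', him', rfl⟩ := hz'
  refine ⟨w + w', ?_, ?_, exp_add w w'⟩
  · simpa only [add_re] using (abs_add_le _ _).trans (add_le_add hre hre')
  · simpa only [add_im] using (abs_add_le _ _).trans (add_le_add him him')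

lemma zpow_mem_expRect {z : ℂ} {R θ : ℝ} (hz : z ∈ expRect R θ) (n : ℤ) :
    z ^ n ∈ expRect (|(n : ℝ)| * R) (|(n : ℝ)| * θ) := by
  obtain ⟨w, hre, him, rfl⟩ := hz
  refine ⟨n * w, ?_, ?_, exp_int_mul w n⟩
  · rw [← ofReal_intCast, re_ofReal_mul, abs_mul]
    exact mul_le_mul_of_nonneg_left hre (abs_nonneg _)
  · rw [← ofReal_intCast, im_ofReal_mul, abs_mul]
    exact mul_le_mul_of_nonneg_left him (abs_nonneg _)

lemma inv_mem_expRect {z : ℂ} {R θ : ℝ} (hz : z ∈ expRect R θ) : z⁻¹ ∈ expRect R θ := by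
  simpa using zpow_mem_expRect hz (-1)

lemma prod_mem_expRect {ι : Type*} {s : Finset ι} {f : ι → ℂ} {R θ : ι → ℝ}
    (h : ∀ i ∈ s, f i ∈ expRect (R i) (θ i)) :
    ∏ i ∈ s, f i ∈ expRect (∑ i ∈ s, R i) (∑ i ∈ s, θ i) := by
  classical
  induction s using Finset.induction_on with
  | empty => exact ⟨0, by simp, by simp, exp_zero⟩
  | insert i s hi ih =>
    rw [Finset.prod_insert hi, Finset.sum_insert hi, Finset.sum_insert hi]
    exact mul_mem_expRect (h i (s.mem_insert_self i))
      (ih fun j hj => h j (Finset.mem_insert_of_mem hj))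

lemma exp_neg_mul_cos_le_re {z : ℂ} {R θ : ℝ} (hz : z ∈ expRect R θ) (hθ : θ ≤ Real.pi / 2) :
    Real.exp (-R) * Real.cos θ ≤ z.re := by
  obtain ⟨w, hre, him, rfl⟩ := hz
  have hθ₀ : 0 ≤ θ := (abs_nonneg _).trans him
  have hexp : Real.exp (-R) ≤ Real.exp w.re := Real.exp_le_exp.2 (neg_le_of_abs_le hre)
  have hcos : Real.cos θ ≤ Real.cos w.im := by
    rw [← Real.cos_abs w.im]
    exact Real.cos_le_cos_of_nonneg_of_le_pi (abs_nonneg _) (by linarith [Real.pi_pos]) him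
  rw [exp_re]
  exact mul_le_mul hexp hcos (Real.cos_nonneg_of_neg_pi_div_two_le_of_le (by linarith) hθ)
    (Real.exp_pos _).le

lemma abs_im_le_norm_mul_norm_one_sub (a : ℂ) : |a.im| ≤ ‖a‖ * ‖1 - a‖ := by
  have him : a.im = -(conj a * (1 - a)).im := by
    simp only [mul_im, conj_re, conj_im, sub_re, sub_im, one_re, one_im]
    ring
  rw [him, abs_neg, ← norm_conj a, ← norm_mul]
  exact abs_im_le_norm _

lemma abs_arg_le_arcsin_norm_one_sub {a : ℂ} (h : ‖1 - a‖ ≤ 1) : |arg a| ≤ Real.arcsin ‖1 - a‖ := by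
  have hre : 0 ≤ a.re := by
    have := re_le_norm (1 - a)
    rw [sub_re, one_re] at this
    linarith
  have hsin : |a.im / ‖a‖| ≤ ‖1 - a‖ := by
    rcases eq_or_ne a 0 with rfl | ha
    · simp
    rw [abs_div, abs_norm, div_le_iff₀ (norm_pos_iff.2 ha), mul_comm]
    exact abs_im_le_norm_mul_norm_one_sub a
  rw [arg_of_re_nonneg hre, abs_le, ← Real.arcsin_neg]
  exact ⟨Real.arcsin_le_arcsin (neg_le_of_abs_le hsin), Real.arcsin_le_arcsin (le_of_abs_le hsin)⟩

lemma mem_expRect_of_norm_one_sub_le {z : ℂ} {δ : ℝ} (hδ : δ < 1) (h : ‖1 - z‖ ≤ δ) :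
    z ∈ expRect (-Real.log (1 - δ)) (Real.arcsin δ) := by
  have hlow : 1 - δ ≤ ‖z‖ := by
    have := norm_sub_norm_le (1 : ℂ) z
    rw [norm_one] at this
    linarith
  have hup : ‖z‖ ≤ (1 - δ)⁻¹ := by
    have := norm_sub_norm_le z 1
    rw [norm_one, norm_sub_rev] at this
    rw [← one_div, le_div_iff₀ (by linarith)]
    nlinarith [(norm_nonneg _).trans h]
  have hz : z ≠ 0 := norm_pos_iff.1 (by linarith)
  refine ⟨log z, ?_, ?_, exp_log hz⟩
  · rw [log_re, abs_le, neg_neg, ← Real.log_inv]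
    exact ⟨Real.log_le_log (by linarith) hlow, Real.log_le_log (norm_pos_iff.2 hz) hup⟩
  · rw [log_im]
    exact (abs_arg_le_arcsin_norm_one_sub (by linarith)).trans (Real.arcsin_le_arcsin h)

namespace Real

lemma arcsin_le_div_sqrt {x : ℝ} (h₀ : 0 ≤ x) (h₁ : x < 1) : arcsin x ≤ x / √(1 - x ^ 2) := by
  rw [← tan_arcsin]
  exact le_tan (arcsin_nonneg.2 h₀) (arcsin_lt_pi_div_two.2 h₁)

lemma two_mul_one_sub_sq_div_eight_sq_sub_one_le_cos {x : ℝ} (hx : x ^ 2 ≤ 8) :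
    2 * (1 - x ^ 2 / 8) ^ 2 - 1 ≤ cos x := by
  have hhalf : 1 - x ^ 2 / 8 ≤ cos (x / 2) := by
    have := one_sub_sq_div_two_le_cos (x := x / 2)
    linarith
  have hsq := pow_le_pow_left₀ (by linarith) hhalf 2
  have := cos_sq (x / 2)
  rw [mul_div_cancel₀ x two_ne_zero] at this
  linarith

lemma arcsin_one_div_eight_le : arcsin (1 / 8) ≤ 63 / 500 := by
  have hsqrt : 9921 / 10000 ≤ √(1 - (1 / 8) ^ 2) := by
    rw [le_sqrt (by norm_num) (by norm_num)]
    norm_num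
  refine (arcsin_le_div_sqrt (by norm_num) (by norm_num)).trans ?_
  rw [div_le_iff₀ (by positivity)]
  linarith

lemma natCast_mul_arcsin_inv_le {d : ℕ} (hd : 1 ≤ d) : d * arcsin (4 * d : ℝ)⁻¹ ≤ 13 / 50 := by
  have hd' : (1 : ℝ) ≤ d := by exact_mod_cast hd
  set q : ℝ := (4 * d : ℝ)⁻¹ with hq
  have hq₀ : 0 ≤ q := by positivity
  have hdq : d * q = 1 / 4 := by rw [hq]; field_simp
  have hq₁ : q ≤ 1 / 4 := by nlinarith
  have hsqrt : 968 / 1000 ≤ √(1 - q ^ 2) := by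
    rw [le_sqrt (by norm_num) (by nlinarith)]
    nlinarith
  calc d * arcsin q ≤ d * (q / √(1 - q ^ 2)) :=
        mul_le_mul_of_nonneg_left (arcsin_le_div_sqrt hq₀ (by linarith)) (by positivity)
    _ = 1 / 4 / √(1 - q ^ 2) := by rw [← hdq]; ring
    _ ≤ 13 / 50 := by
        rw [div_le_iff₀ (by linarith)]
        linarith

lemma two_mul_arcsin_one_div_eight_add_le {d : ℕ} (hd : 1 ≤ d) :
    2 * arcsin (1 / 8) + d * arcsin (4 * d : ℝ)⁻¹ ≤ 64 / 125 := by
  linarith [arcsin_one_div_eight_le, natCast_mul_arcsin_inv_le hd]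

lemma three_div_four_le_one_sub_inv_pow {d : ℕ} (hd : 1 ≤ d) : 3 / 4 ≤ (1 - (4 * d : ℝ)⁻¹) ^ d := by
  have hd' : (1 : ℝ) ≤ d := by exact_mod_cast hd
  have hBernoulli := one_add_mul_le_pow (a := -(4 * d : ℝ)⁻¹) (by
    have : (4 * d : ℝ)⁻¹ ≤ 1 := inv_le_one_of_one_le₀ (by linarith)
    linarith) d
  have hdq : (d : ℝ) * -(4 * d : ℝ)⁻¹ = -1 / 4 := by field_simp
  rw [hdq, ← sub_eq_add_neg] at hBernoulli
  linarith

lemma one_half_le_exp_mul_cos {d : ℕ} (hd : 1 ≤ d) :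
    1 / 2 ≤ exp (-(2 * -log (1 - 1 / 8) + d * -log (1 - (4 * d : ℝ)⁻¹))) *
      cos (2 * arcsin (1 / 8) + d * arcsin (4 * d : ℝ)⁻¹) := by
  have hd' : (1 : ℝ) ≤ d := by exact_mod_cast hd
  have hq : (4 * d : ℝ)⁻¹ < 1 := inv_lt_one_of_one_lt₀ (by linarith)
  have hmod : exp (-(2 * -log (1 - 1 / 8) + d * -log (1 - (4 * d : ℝ)⁻¹))) =
      (7 / 8) ^ 2 * (1 - (4 * d : ℝ)⁻¹) ^ d := by
    rw [show -(2 * -log (1 - 1 / 8) + d * -log (1 - (4 * d : ℝ)⁻¹)) =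
        log (1 - 1 / 8) + log (1 - 1 / 8) + d * log (1 - (4 * d : ℝ)⁻¹) by ring,
      exp_add, exp_add, exp_nat_mul, exp_log (by norm_num), exp_log (by linarith)]
    norm_num
  set θ := 2 * arcsin (1 / 8) + d * arcsin (4 * d : ℝ)⁻¹
  have hθ₀ : 0 ≤ θ := by
    have := arcsin_nonneg.2 (by positivity : (0 : ℝ) ≤ (4 * d : ℝ)⁻¹)
    have := arcsin_nonneg.2 (by norm_num : (0 : ℝ) ≤ 1 / 8)
    positivity
  have hθ : θ ≤ 64 / 125 := two_mul_arcsin_one_div_eight_add_le hd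
  -- `1 - θ ^ 2 / 2 ≤ cos θ` falls just short; the half-angle bound leaves a margin of `2·10⁻⁴`.
  have hcos := two_mul_one_sub_sq_div_eight_sq_sub_one_le_cos (x := θ) (by nlinarith)
  have hθsq : 1 - (64 / 125) ^ 2 / 8 ≤ 1 - θ ^ 2 / 8 := by nlinarith
  have hcos' : 2 * (1 - (64 / 125) ^ 2 / 8) ^ 2 - 1 ≤ cos θ := by
    nlinarith [pow_le_pow_left₀ (by norm_num) hθsq 2]
  rw [hmod]
  nlinarith [three_div_four_le_one_sub_inv_pow hd]

end Real

lemma card_mul_le_norm_sum {ι : Type*} {s : Finset ι} {f : ι → ℂ} {c : ℝ}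
    (h : ∀ i ∈ s, c ≤ (f i).re) : s.card * c ≤ ‖∑ i ∈ s, f i‖ :=
  calc s.card * c ≤ ∑ i ∈ s, (f i).re := by
        simpa only [nsmul_eq_mul] using Finset.card_nsmul_le_sum s _ c h
    _ = (∑ i ∈ s, f i).re := (re_sum s f).symm
    _ ≤ ‖∑ i ∈ s, f i‖ := re_le_norm _

section AddChar

variable {G : Type*} [AddCommGroup G] {x : G} {δ : ℝ}

lemma apply_mem_expRect_of_mem_mul_inv {Γ : Set (AddChar G ℂ)} (hδ : δ < 1)
    (hΓ : ∀ γ ∈ Γ, ‖1 - γ x‖ ≤ δ) {ψ : AddChar G ℂ} (hψ : ψ ∈ Γ * Γ⁻¹) :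
    ψ x ∈ expRect (2 * -Real.log (1 - δ)) (2 * Real.arcsin δ) := by
  obtain ⟨γ, hγ, η, hη, rfl⟩ := hψ
  rw [AddChar.mul_apply, ← inv_inv η, AddChar.inv_apply' η⁻¹, two_mul, two_mul]
  exact mul_mem_expRect (mem_expRect_of_norm_one_sub_le hδ (hΓ γ hγ))
    (inv_mem_expRect (mem_expRect_of_norm_one_sub_le hδ (hΓ _ hη)))

lemma apply_mem_expRect_of_mem_spanPM {Λ : Finset (AddChar G ℂ)} (hδ₀ : 0 ≤ δ) (hδ : δ < 1)
    (hΛ : ∀ γ ∈ Λ, ‖1 - γ x‖ ≤ δ) {ψ : AddChar G ℂ} (hψ : ψ ∈ spanPM Λ) :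
    ψ x ∈ expRect (Λ.card * -Real.log (1 - δ)) (Λ.card * Real.arcsin δ) := by
  obtain ⟨ε, hε, rfl⟩ := hψ
  have hR : 0 ≤ -Real.log (1 - δ) := neg_nonneg.2 (Real.log_nonpos (by linarith) (by linarith))
  have hθ : 0 ≤ Real.arcsin δ := Real.arcsin_nonneg.2 hδ₀
  have hmem : ∀ γ ∈ Λ, (γ ^ ε γ) x ∈ expRect (-Real.log (1 - δ)) (Real.arcsin δ) := by
    intro γ hγ
    have hεγ : |(ε γ : ℝ)| ≤ 1 := by rcases hε γ with h | h | h <;> simp [h]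
    rw [AddChar.zpow_apply]
    exact expRect_mono (mul_le_of_le_one_left hR hεγ) (mul_le_of_le_one_left hθ hεγ)
      (zpow_mem_expRect (mem_expRect_of_norm_one_sub_le hδ (hΛ γ hγ)) (ε γ))
  simpa only [AddChar.prod_apply, Finset.sum_const, nsmul_eq_mul] using prod_mem_expRect hmem

lemma one_half_le_re_apply {Γ : Set (AddChar G ℂ)} {Λ : Finset (AddChar G ℂ)} {d : ℕ}
    (hd : 1 ≤ d) (hΛ : Λ.card ≤ d) (hxΛ : ∀ γ ∈ Λ, ‖1 - γ x‖ ≤ (4 * d : ℝ)⁻¹)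
    (hxΓ : ∀ γ ∈ Γ, ‖1 - γ x‖ ≤ 1 / 8) {ψ : AddChar G ℂ} (hψ : ψ ∈ Γ * Γ⁻¹ * spanPM Λ) :
    1 / 2 ≤ (ψ x).re := by
  have hd' : (1 : ℝ) ≤ d := by exact_mod_cast hd
  have hq : (4 * d : ℝ)⁻¹ < 1 := inv_lt_one_of_one_lt₀ (by linarith)
  obtain ⟨φ, hφ, χ, hχ, rfl⟩ := hψ
  have hmem := mul_mem_expRect (apply_mem_expRect_of_mem_mul_inv (by norm_num) hxΓ hφ)
    (apply_mem_expRect_of_mem_spanPM (by positivity) hq hxΛ hχ)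
  have hΛd : (Λ.card : ℝ) ≤ d := by exact_mod_cast hΛ
  have hR : 0 ≤ -Real.log (1 - (4 * d : ℝ)⁻¹) :=
    neg_nonneg.2 (Real.log_nonpos (by linarith) (by simp))
  have hθ : 0 ≤ Real.arcsin (4 * d : ℝ)⁻¹ := Real.arcsin_nonneg.2 (by positivity)
  have hmem_d := expRect_mono (add_le_add_right (mul_le_mul_of_nonneg_right hΛd hR) _)
    (add_le_add_right (mul_le_mul_of_nonneg_right hΛd hθ) _) hmem
  rw [AddChar.mul_apply]
  refine (Real.one_half_le_exp_mul_cos hd).trans (exp_neg_mul_cos_le_re hmem_d ?_)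
  linarith [Real.two_mul_arcsin_one_div_eight_add_le hd, Real.pi_gt_three]

end AddChar

/-- **Control on a covering set gives control on the whole covered set.** If `Δ` is
`d`-covered by `Γ`, there is `Λ` of size at most `d` such that any `B` having
`(4d)⁻¹`-control of `Λ` and `1/8`-control of `Γ` satisfies `|B̂(γ)| ≥ |B|/2` for every
`γ ∈ Δ`. -/
theorem control_of_covered {G : Type*} [AddCommGroup G]
    (Γ Δ : Set (AddChar G ℂ)) (d : ℕ) (hd : 1 ≤ d)
    (hcov : ∃ Λ : Finset (AddChar G ℂ), Λ.card ≤ d ∧ Δ ⊆ Γ * Γ⁻¹ * spanPM Λ) :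
    ∃ Λ : Finset (AddChar G ℂ), Λ.card ≤ d ∧
      ∀ B : Finset G,
        (∀ x ∈ B, ∀ γ ∈ Λ, ‖1 - γ x‖ ≤ ((4 * d : ℕ) : ℝ)⁻¹) →
        (∀ x ∈ B, ∀ γ ∈ Γ, ‖1 - γ x‖ ≤ 1 / 8) →
        ∀ γ ∈ Δ, (B.card : ℝ) / 2 ≤ ‖∑ x ∈ B, γ x‖ := by
  obtain ⟨Λ, hΛ, hΔ⟩ := hcov
  refine ⟨Λ, hΛ, fun B hBΛ hBΓ γ hγ => ?_⟩
  push_cast at hBΛ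
  rw [div_eq_mul_one_div]
  exact card_mul_le_norm_sum fun x hx =>
    one_half_le_re_apply hd hΛ (hBΛ x hx) (hBΓ x hx) (hΔ hγ)
end
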